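/- For n ≥ 3, let w_n^+ and w_n^- denote the number of n-tuples over Z/4Z whose M_n product equals Id and -Id respectively. If n is odd then w_n^+ = w_n^- = (4^{n-2} - 2^{n-3})/3. If n = 2m with m even then w_n^+ = (4^{n-2} + 4·2^{n-3})/3 and w_n^- = (4^{n-2} - 2^{n-2})/3. If n = 2m with m odd then w_n^+ = (4^{n-2} - 2^{n-2})/3 and w_n^- = (4^{n-2} + 4·2^{n-3})/3. -/

import Mathlib

def mat {A : Type*} [CommRing A] (a : A) : Matrix (Fin 2) (Fin 2) A := !![a, -1; 1, 0]

def M {A : Type*} [CommRing A] {n : ℕ} (a : Fin n → A) : Matrix (Fin 2) (Fin 2) A :=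
  ((List.ofFn a).map mat).reverse.prod

/-!
Write `mat y * mat x = !![y * x - 1, -y; x, -1]`: these products are exactly the determinant-one
matrices with bottom-right entry `-1`, each obtained from a unique pair `(x, y)`. Hence the first
two letters of a word with product `±1` are determined by the remaining `k = n - 2` letters `f`,
and exist iff `M f 0 0 = ∓1`.

Multiplying on the right by `mat x` turns the first row `(p, q)` of a product into
`(p * x + q, -p)`. Over `ZMod 4`, the number `U k` of words of length `k` whose first row starts
with a unit satisfies `U (k + 2) = 2 U (k + 1) + 8 U k`, and the difference `D k` between the
numbers of words with top-left entry `1` and `3` satisfies `D (k + 2) = -4 D k`. So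
`U k = (2 * 4 ^ k + (-2) ^ k) / 3`, `D k = (-4) ^ (k / 2)` for even `k`, `D k = 0` for odd `k`,
and the two counts are `(U k ± D k) / 2`.
-/

open Matrix

theorem Nat.card_fin_succ_subtype_eq_sum {A : Type*} [Fintype A] {k : ℕ}
    (P : (Fin (k + 1) → A) → Prop) :
    Nat.card {f // P f} = ∑ x, Nat.card {f : Fin k → A // P (Fin.cons x f)} := by
  rw [← Nat.card_sigma]
  exact Nat.card_congr (((Fin.consEquiv fun _ => A).subtypeEquiv fun _ => Iff.rfl).symm.trans
    (Equiv.subtypeProdEquivSigmaSubtype fun x f => P (Fin.cons x f)))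

section Words

variable {A : Type*} [CommRing A]

theorem M_cons {k : ℕ} (x : A) (f : Fin k → A) : M (Fin.cons x f) = M f * mat x := by
  simp [M, List.ofFn_succ]

theorem det_mat (x : A) : (mat x).det = 1 := by
  simp [mat, det_fin_two]

theorem det_M {k : ℕ} (f : Fin k → A) : (M f).det = 1 := by
  induction f using Fin.consInduction with
  | elim0 => simp [M]
  | cons x f ih => rw [M_cons, det_mul, ih, det_mat, one_mul]

theorem mat_mul_mat (x y : A) : mat y * mat x = !![y * x - 1, -y; x, -1] := by
  simp [mat, sub_eq_add_neg]

theorem mat_mul_mat_eq_iff {h : Matrix (Fin 2) (Fin 2) A} (hh : h.det = 1) {x y : A} :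
    mat y * mat x = h ↔ h 1 1 = -1 ∧ h 1 0 = x ∧ h 0 1 = -y := by
  rw [mat_mul_mat]
  constructor
  · rintro rfl
    simp
  · rintro ⟨h11, h10, h01⟩
    rw [det_fin_two, h11, h10, h01] at hh
    ext i j
    fin_cases i <;> fin_cases j <;> simp [h11, h10, h01]
    linear_combination hh

theorem M_cons_cons_eq_iff {g : Matrix (Fin 2) (Fin 2) A} {k : ℕ} (x y : A) (f : Fin k → A) :
    M (Fin.cons x (Fin.cons y f)) = g ↔ mat y * mat x = (M f).adjugate * g := by
  rw [M_cons, M_cons, mul_assoc]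
  constructor
  · rintro rfl
    rw [← mul_assoc, adjugate_mul, det_M, one_smul, one_mul]
  · intro h
    rw [h, ← mul_assoc, mul_adjugate, det_M, one_smul, one_mul]

theorem det_adjugate_M_mul {g : Matrix (Fin 2) (Fin 2) A} (hg : g.det = 1) {k : ℕ}
    (f : Fin k → A) : ((M f).adjugate * g).det = 1 := by
  rw [det_mul, det_adjugate, det_M, hg, one_pow, one_mul]

def dropTwoEquiv {g : Matrix (Fin 2) (Fin 2) A} (hg : g.det = 1) (k : ℕ) :
    {a : Fin (k + 2) → A // M a = g} ≃ {f : Fin k → A // ((M f).adjugate * g) 1 1 = -1} where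
  toFun a := ⟨Fin.tail (Fin.tail a.1), by
    have h := a.2
    rw [← Fin.cons_self_tail a.1, ← Fin.cons_self_tail (Fin.tail a.1), M_cons_cons_eq_iff,
      mat_mul_mat_eq_iff (det_adjugate_M_mul hg _)] at h
    exact h.1⟩
  invFun f :=
    ⟨Fin.cons (((M f.1).adjugate * g) 1 0) (Fin.cons (-((M f.1).adjugate * g) 0 1) f.1), by
      rw [M_cons_cons_eq_iff, mat_mul_mat_eq_iff (det_adjugate_M_mul hg _), neg_neg]
      exact ⟨f.2, rfl, rfl⟩⟩
  left_inv a := by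
    obtain ⟨a, h⟩ := a
    rw [← Fin.cons_self_tail a, ← Fin.cons_self_tail (Fin.tail a), M_cons_cons_eq_iff,
      mat_mul_mat_eq_iff (det_adjugate_M_mul hg _)] at h
    ext1
    change Fin.cons _ (Fin.cons _ _) = a
    rw [h.2.1, h.2.2, neg_neg, Fin.cons_self_tail, Fin.cons_self_tail]
  right_inv f := rfl

theorem card_M_eq_one (k : ℕ) :
    Nat.card {a : Fin (k + 2) → A // M a = 1} = Nat.card {f : Fin k → A // M f 0 0 = -1} :=
  Nat.card_congr <| (dropTwoEquiv det_one k).trans <|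
    Equiv.subtypeEquivRight fun f => by simp [adjugate_fin_two]

theorem card_M_eq_neg_one (k : ℕ) :
    Nat.card {a : Fin (k + 2) → A // M a = -1} = Nat.card {f : Fin k → A // M f 0 0 = 1} :=
  Nat.card_congr <| (dropTwoEquiv (by simp [det_fin_two]) k).trans <|
    Equiv.subtypeEquivRight fun f => by simp [adjugate_fin_two]

end Words

section RowCount

variable {A : Type*} [CommRing A]

noncomputable def rowCount (k : ℕ) (p q : A) : ℕ :=
  Nat.card {f : Fin k → A // M f 0 0 = p ∧ M f 0 1 = q}

theorem rowCount_zero [DecidableEq A] (p q : A) :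
    rowCount 0 p q = if p = 1 ∧ q = 0 then 1 else 0 := by
  have hM : ∀ f : Fin 0 → A, M f = 1 := fun _ => rfl
  simp only [rowCount, hM, one_apply_eq, one_apply_ne zero_ne_one, eq_comm (a := p),
    eq_comm (a := q)]
  split_ifs with h
  · simp [h]
  · simp [h]

variable [Fintype A]

def rowStep (w : A → A → ℕ) (p q : A) : ℕ := ∑ x, w (-q) (p + q * x)

theorem rowCount_succ (k : ℕ) : rowCount (A := A) (k + 1) = rowStep (rowCount k) := by
  ext p q
  rw [rowCount, Nat.card_fin_succ_subtype_eq_sum]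
  refine Finset.sum_congr rfl fun x _ => Nat.card_congr <| Equiv.subtypeEquivRight fun f => ?_
  simp only [M_cons, mul_apply, Fin.sum_univ_two, mat, of_apply, cons_val', cons_val_zero,
    cons_val_one, empty_val', cons_val_fin_one]
  constructor
  · rintro ⟨rfl, rfl⟩
    constructor <;> ring
  · rintro ⟨h0, h1⟩
    exact ⟨by linear_combination x * h0 + h1, by linear_combination -h0⟩

theorem card_M_apply_zero_zero (k : ℕ) (p : A) :
    Nat.card {f : Fin k → A // M f 0 0 = p} = ∑ q, rowCount k p q := by
  unfold rowCount
  rw [← Nat.card_sigma]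
  exact (Nat.card_congr <| (Equiv.sigmaCongrRight fun q =>
    (Equiv.subtypeSubtypeEquivSubtypeInter _ (fun f => M f 0 1 = q)).symm).trans
    (Equiv.sigmaFiberEquiv fun f : {f : Fin k → A // M f 0 0 = p} => M f.1 0 1)).symm

end RowCount

section ZMod4

theorem ZMod.sum_univ_four {β : Type*} [AddCommMonoid β] (f : ZMod 4 → β) :
    ∑ x, f x = f 0 + f 1 + f 2 + f 3 :=
  Fin.sum_univ_four f

def unitMass (w : ZMod 4 → ZMod 4 → ℕ) : ℤ := ∑ q, ((w 1 q : ℤ) + w 3 q)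

def signedMass (w : ZMod 4 → ZMod 4 → ℕ) : ℤ := ∑ q, ((w 1 q : ℤ) - w 3 q)

theorem unitMass_rowStep_rowStep (w : ZMod 4 → ZMod 4 → ℕ) :
    unitMass (rowStep (rowStep w)) = 2 * unitMass (rowStep w) + 8 * unitMass w := by
  simp only [unitMass, rowStep, ZMod.sum_univ_four]
  push_cast
  reduce_mod_char
  ring

theorem signedMass_rowStep_rowStep (w : ZMod 4 → ZMod 4 → ℕ) :
    signedMass (rowStep (rowStep w)) = -4 * signedMass w := by
  simp only [signedMass, rowStep, ZMod.sum_univ_four]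
  push_cast
  reduce_mod_char
  ring

theorem unitMass_rowCount_zero : unitMass (rowCount (A := ZMod 4) 0) = 1 := by
  simp only [unitMass, rowCount_zero, ZMod.sum_univ_four]
  decide

theorem unitMass_rowCount_one : unitMass (rowCount (A := ZMod 4) 1) = 2 := by
  simp only [unitMass, rowCount_succ, rowStep, rowCount_zero, ZMod.sum_univ_four]
  decide

theorem signedMass_rowCount_zero : signedMass (rowCount (A := ZMod 4) 0) = 1 := by
  simp only [signedMass, rowCount_zero, ZMod.sum_univ_four]
  decide

theorem signedMass_rowCount_one : signedMass (rowCount (A := ZMod 4) 1) = 0 := by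
  simp only [signedMass, rowCount_succ, rowStep, rowCount_zero, ZMod.sum_univ_four]
  decide

theorem unitMass_rowCount (k : ℕ) :
    3 * unitMass (rowCount (A := ZMod 4) k) = 2 * 4 ^ k + (-2) ^ k := by
  induction k using Nat.twoStepInduction with
  | zero => rw [unitMass_rowCount_zero]; norm_num
  | one => rw [unitMass_rowCount_one]; norm_num
  | more k ih₀ ih₁ =>
    rw [rowCount_succ, rowCount_succ, unitMass_rowStep_rowStep, ← rowCount_succ]
    linear_combination 2 * ih₁ + 8 * ih₀

theorem signedMass_rowCount_even (j : ℕ) :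
    signedMass (rowCount (A := ZMod 4) (2 * j)) = (-4) ^ j := by
  induction j with
  | zero => exact signedMass_rowCount_zero
  | succ j ih =>
    rw [mul_add, mul_one, rowCount_succ, rowCount_succ, signedMass_rowStep_rowStep, ih, pow_succ,
      mul_comm]

theorem signedMass_rowCount_odd (j : ℕ) :
    signedMass (rowCount (A := ZMod 4) (2 * j + 1)) = 0 := by
  induction j with
  | zero => exact signedMass_rowCount_one
  | succ j ih =>
    rw [show 2 * (j + 1) + 1 = 2 * j + 1 + 1 + 1 by ring, rowCount_succ, rowCount_succ,
      signedMass_rowStep_rowStep, ih, mul_zero]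

theorem card_M_apply_zero_zero_eq_one (k : ℕ) :
    (Nat.card {f : Fin k → ZMod 4 // M f 0 0 = 1} : ℚ) =
      (2 * 4 ^ k + (-2) ^ k + 3 * signedMass (rowCount k)) / 6 := by
  have h : 2 * (Nat.card {f : Fin k → ZMod 4 // M f 0 0 = 1} : ℤ) =
      unitMass (rowCount k) + signedMass (rowCount k) := by
    rw [card_M_apply_zero_zero, unitMass, signedMass, ← Finset.sum_add_distrib]
    push_cast
    rw [Finset.mul_sum]
    exact Finset.sum_congr rfl fun q _ => by ring
  rw [eq_div_iff (by norm_num)]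
  exact_mod_cast (by linear_combination 3 * h + unitMass_rowCount k :
    (Nat.card {f : Fin k → ZMod 4 // M f 0 0 = 1} : ℤ) * 6 =
      2 * 4 ^ k + (-2) ^ k + 3 * signedMass (rowCount k))

theorem card_M_apply_zero_zero_eq_neg_one (k : ℕ) :
    (Nat.card {f : Fin k → ZMod 4 // M f 0 0 = -1} : ℚ) =
      (2 * 4 ^ k + (-2) ^ k - 3 * signedMass (rowCount k)) / 6 := by
  have h : 2 * (Nat.card {f : Fin k → ZMod 4 // M f 0 0 = -1} : ℤ) =
      unitMass (rowCount k) - signedMass (rowCount k) := by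
    rw [show (-1 : ZMod 4) = 3 from rfl, card_M_apply_zero_zero, unitMass, signedMass,
      ← Finset.sum_sub_distrib]
    push_cast
    rw [Finset.mul_sum]
    exact Finset.sum_congr rfl fun q _ => by ring
  rw [eq_div_iff (by norm_num)]
  exact_mod_cast (by linear_combination 3 * h + unitMass_rowCount k :
    (Nat.card {f : Fin k → ZMod 4 // M f 0 0 = -1} : ℤ) * 6 =
      2 * 4 ^ k + (-2) ^ k - 3 * signedMass (rowCount k))

end ZMod4

theorem stmt17 (n : ℕ) (hn : 3 ≤ n) :
    (Odd n →
      (Nat.card {a : Fin n → ZMod 4 // M a = 1} : ℚ) = ((4 : ℚ) ^ (n - 2) - 2 ^ (n - 3)) / 3 ∧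
      (Nat.card {a : Fin n → ZMod 4 // M a = -1} : ℚ) = ((4 : ℚ) ^ (n - 2) - 2 ^ (n - 3)) / 3) ∧
    (∀ m : ℕ, n = 2 * m → Even m →
      (Nat.card {a : Fin n → ZMod 4 // M a = 1} : ℚ) =
          ((4 : ℚ) ^ (n - 2) + 4 * 2 ^ (n - 3)) / 3 ∧
      (Nat.card {a : Fin n → ZMod 4 // M a = -1} : ℚ) =
          ((4 : ℚ) ^ (n - 2) - 2 ^ (n - 2)) / 3) ∧
    (∀ m : ℕ, n = 2 * m → Odd m →
      (Nat.card {a : Fin n → ZMod 4 // M a = 1} : ℚ) =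
          ((4 : ℚ) ^ (n - 2) - 2 ^ (n - 2)) / 3 ∧
      (Nat.card {a : Fin n → ZMod 4 // M a = -1} : ℚ) =
          ((4 : ℚ) ^ (n - 2) + 4 * 2 ^ (n - 3)) / 3) := by
  obtain ⟨k, rfl⟩ : ∃ k, n = k + 2 := ⟨n - 2, by omega⟩
  simp only [card_M_eq_one, card_M_eq_neg_one, card_M_apply_zero_zero_eq_one,
    card_M_apply_zero_zero_eq_neg_one, Nat.add_sub_cancel]
  refine ⟨fun ⟨j, hj⟩ => ?_, fun m hm ⟨i, hi⟩ => ?_, fun m hm ⟨i, hi⟩ => ?_⟩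
  · obtain ⟨j, rfl⟩ : ∃ j, k = 2 * j + 1 := ⟨j - 1, by omega⟩
    rw [signedMass_rowCount_odd, show 2 * j + 1 + 2 - 3 = 2 * j by omega]
    constructor <;> simp only [pow_succ, pow_mul] <;> norm_num <;> ring
  · obtain ⟨i, rfl⟩ : ∃ i, k = 2 * (2 * i + 1) := ⟨i - 1, by omega⟩
    rw [signedMass_rowCount_even, show 2 * (2 * i + 1) + 2 - 3 = 4 * i + 1 by omega]
    constructor <;> simp only [pow_succ, pow_mul] <;> norm_num <;> ring
  · obtain ⟨i, rfl⟩ : ∃ i, k = 2 * (2 * i + 2) := ⟨i - 1, by omega⟩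
    rw [signedMass_rowCount_even, show 2 * (2 * i + 2) + 2 - 3 = 4 * i + 3 by omega]
    constructor <;> simp only [pow_succ, pow_mul] <;> norm_num <;> ring
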